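/- The direct limit of the system ℤ² → ℤ² → ⋯ with each map given by the matrix [[3,1],[1,3]] splits as a direct sum ℤ[1/4] ⊕ ℤ[1/2], with the summands generated by the classes of the eigenvectors (1,1) (eigenvalue 4) and (1,−1) (eigenvalue 2). -/

import Mathlib

/-!
Since `σ (1,1) = 4 • (1,1)` and `σ (1,-1) = 2 • (1,-1)`, sending `v` at stage `k` to its
coordinates in the eigenbasis, divided by `4 ^ k` and `2 ^ k`, is compatible with `σ` and
induces an injective map `L → ℚ × ℚ` (each stage map is injective). Its image is
`ℤ[1/2] × ℤ[1/2]`: every stage lands there, and the classes of `2 ^ n • (1,1)` and `(1,-1)`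
at stage `n` hit the generators `(1/2^n, 0)` and `(0, 1/2^n)`.
-/

noncomputable section

/-- The subgroup `ℤ[1/p] ⊆ ℚ` of fractions with denominator a power of `p`. -/
def zOneDiv (p : ℕ) : AddSubgroup ℚ :=
  AddSubgroup.closure {q : ℚ | ∃ n : ℕ, q = 1 / (p : ℚ) ^ n}

/-- The matrix `[[3,1],[1,3]]` as an endomorphism of `ℤ²`. -/
def sigma : Module.End ℤ (Fin 2 → ℤ) := Matrix.toLin' !![3, 1; 1, 3]

/-- The constant directed system `ℤ² → ℤ² → ⋯` with transition map `σ`. -/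
def fSys : ∀ i j : ℕ, i ≤ j → (Fin 2 → ℤ) →ₗ[ℤ] (Fin 2 → ℤ) :=
  fun i j _ => sigma ^ (j - i)

/-- The direct limit `lim→(ℤ², σ)`. -/
def L : Type := Module.DirectLimit (fun _ : ℕ => Fin 2 → ℤ) fSys

instance : AddCommGroup L := Module.DirectLimit.addCommGroup _ fSys

/-- The class in the direct limit of a vector at stage `k`. -/
def ofL (k : ℕ) (v : Fin 2 → ℤ) : L :=
  Module.DirectLimit.of ℤ ℕ (fun _ : ℕ => Fin 2 → ℤ) fSys k v

/-- `1/4^k ∈ ℤ[1/2]`. -/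
def quarterPow (k : ℕ) : ↥(zOneDiv 2) :=
  ⟨1 / (4 : ℚ) ^ k, AddSubgroup.subset_closure ⟨2 * k, by rw [pow_mul]; norm_num⟩⟩

/-- `1/2^k ∈ ℤ[1/2]`. -/
def halfPow (k : ℕ) : ↥(zOneDiv 2) :=
  ⟨1 / (2 : ℚ) ^ k, AddSubgroup.subset_closure ⟨k, rfl⟩⟩

theorem LinearMap.apply_pow_apply_of_comp_eq {R M P : Type*} [Semiring R] [AddCommMonoid M]
    [Module R M] [AddCommMonoid P] [Module R P] {f : Module.End R M} {g : ℕ → M →ₗ[R] P}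
    (hg : ∀ k, g (k + 1) ∘ₗ f = g k) (i n : ℕ) (x : M) : g (i + n) ((f ^ n) x) = g i x := by
  induction n with
  | zero => rfl
  | succ n ih =>
    rw [pow_succ', Module.End.mul_apply, ← add_assoc, ← LinearMap.comp_apply, hg, ih]

theorem intCast_div_pow_mem_zOneDiv (p : ℕ) (a : ℤ) (n : ℕ) :
    (a : ℚ) / (p : ℚ) ^ n ∈ zOneDiv p := by
  have hgen : 1 / (p : ℚ) ^ n ∈ zOneDiv p := AddSubgroup.subset_closure ⟨n, rfl⟩
  rw [div_eq_mul_one_div, ← zsmul_eq_mul]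
  exact AddSubgroup.zsmul_mem _ hgen a

lemma sigma_apply (v : Fin 2 → ℤ) : sigma v = ![3 * v 0 + v 1, v 0 + 3 * v 1] := by
  ext i
  fin_cases i <;> simp [sigma, Matrix.toLin'_apply, Matrix.mulVec, dotProduct, Fin.sum_univ_two]

/-- `v = x • (1,1) + y • (1,-1)` with `x = (v₀ + v₁)/2`, `y = (v₀ - v₁)/2`; at stage `k` these
eigen-coordinates are divided by the `k`-th powers of the eigenvalues `4` and `2`. -/
def eigenCoord (k : ℕ) : (Fin 2 → ℤ) →ₗ[ℤ] ℚ × ℚ where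
  toFun v := ((v 0 + v 1 : ℚ) / (2 * 4 ^ k), (v 0 - v 1 : ℚ) / (2 * 2 ^ k))
  map_add' v w := by
    simp only [Pi.add_apply, Int.cast_add, Prod.mk_add_mk]
    congr 1 <;> ring
  map_smul' c v := by
    simp only [Pi.smul_apply, smul_eq_mul, Int.cast_mul, RingHom.id_apply, Prod.smul_mk,
      zsmul_eq_mul]
    congr 1 <;> ring

lemma eigenCoord_apply (k : ℕ) (v : Fin 2 → ℤ) :
    eigenCoord k v = ((v 0 + v 1 : ℚ) / (2 * 4 ^ k), (v 0 - v 1 : ℚ) / (2 * 2 ^ k)) := rfl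

lemma eigenCoord_succ_comp_sigma (k : ℕ) : eigenCoord (k + 1) ∘ₗ sigma = eigenCoord k := by
  refine LinearMap.ext fun v => ?_
  simp only [LinearMap.comp_apply, eigenCoord_apply, sigma_apply, Matrix.cons_val_zero,
    Matrix.cons_val_one, Int.cast_add, Int.cast_mul, pow_succ]
  congr 1 <;> field_simp <;> ring

lemma eigenCoord_injective (k : ℕ) : Function.Injective (eigenCoord k) := by
  refine (injective_iff_map_eq_zero _).2 fun v hv => ?_
  simp only [eigenCoord_apply, Prod.mk_eq_zero, div_eq_zero_iff] at hv
  have hsum : v 0 + v 1 = 0 := by exact_mod_cast hv.1.resolve_right (by positivity)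
  have hdiff : v 0 - v 1 = 0 := by exact_mod_cast hv.2.resolve_right (by positivity)
  ext i
  fin_cases i <;> simp <;> omega

lemma eigenCoord_one_one (k : ℕ) : eigenCoord k ![1, 1] = (1 / 4 ^ k, 0) := by
  norm_num [eigenCoord_apply, div_mul_cancel_left₀]

lemma eigenCoord_one_neg_one (k : ℕ) : eigenCoord k ![1, -1] = (0, 1 / 2 ^ k) := by
  norm_num [eigenCoord_apply, div_mul_cancel_left₀]

lemma eigenCoord_mem (k : ℕ) (v : Fin 2 → ℤ) :
    eigenCoord k v ∈ (zOneDiv 2).prod (zOneDiv 2) := by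
  have h4 : (2 : ℚ) * 4 ^ k = (2 : ℕ) ^ (2 * k + 1) := by
    rw [pow_succ, pow_mul]; norm_num; ring
  have h2 : (2 : ℚ) * 2 ^ k = (2 : ℕ) ^ (k + 1) := by
    rw [pow_succ]; norm_num; ring
  rw [eigenCoord_apply, h4, h2]
  exact ⟨mod_cast intCast_div_pow_mem_zOneDiv 2 (v 0 + v 1) _,
    mod_cast intCast_div_pow_mem_zOneDiv 2 (v 0 - v 1) _⟩

def limitCoord : L →ₗ[ℤ] ℚ × ℚ :=
  Module.DirectLimit.lift ℤ ℕ _ fSys eigenCoord fun i j hij v => by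
    obtain ⟨n, rfl⟩ := Nat.exists_eq_add_of_le hij
    simpa only [fSys, Nat.add_sub_cancel_left] using LinearMap.apply_pow_apply_of_comp_eq eigenCoord_succ_comp_sigma i n v

lemma limitCoord_ofL (k : ℕ) (v : Fin 2 → ℤ) : limitCoord (ofL k v) = eigenCoord k v :=
  Module.DirectLimit.lift_of _ _ _

lemma limitCoord_injective : Function.Injective limitCoord :=
  Module.DirectLimit.lift_injective _ _ eigenCoord_injective

lemma range_limitCoord :
    limitCoord.toAddMonoidHom.range = (zOneDiv 2).prod (zOneDiv 2) := by
  apply le_antisymm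
  · rintro _ ⟨x, rfl⟩
    induction x using Module.DirectLimit.induction_on with
    | ih k v => exact (limitCoord_ofL k v).symm ▸ eigenCoord_mem k v
  · rw [AddSubgroup.prod_le_iff, AddSubgroup.map_le_iff_le_comap,
      AddSubgroup.map_le_iff_le_comap]
    refine ⟨(AddSubgroup.closure_le _).2 ?_, (AddSubgroup.closure_le _).2 ?_⟩ <;>
      rintro _ ⟨n, rfl⟩
    · refine ⟨(2 ^ n : ℤ) • ofL n ![1, 1], ?_⟩
      have h4 : (4 : ℚ) ^ n = 2 ^ n * 2 ^ n := by rw [← mul_pow]; norm_num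
      simp [limitCoord_ofL, eigenCoord_one_one, h4]
    · exact ⟨ofL n ![1, -1], by simp [limitCoord_ofL, eigenCoord_one_neg_one]⟩

def limitEquiv : L ≃+ ↥(zOneDiv 2) × ↥(zOneDiv 2) :=
  (AddMonoidHom.ofInjective limitCoord_injective).trans
    ((AddEquiv.addSubgroupCongr range_limitCoord).trans (AddSubgroup.prodEquiv _ _))

lemma prodMap_val_limitEquiv_ofL (k : ℕ) (v : Fin 2 → ℤ) :
    Prod.map Subtype.val Subtype.val (limitEquiv (ofL k v)) = eigenCoord k v :=
  limitCoord_ofL k v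

/-- The direct limit of `ℤ² → ℤ² → ⋯` along `[[3,1],[1,3]]` splits as `ℤ[1/4] ⊕ ℤ[1/2]`,
with summands generated by the classes of the eigenvectors `(1,1)` (eigenvalue 4) and
`(1,−1)` (eigenvalue 2): there is an isomorphism sending the class of `(1,1)` at stage `k`
to `(1/4^k, 0)` and the class of `(1,−1)` at stage `k` to `(0, 1/2^k)`. -/
theorem stmt5 :
    ∃ e : L ≃+ ↥(zOneDiv 2) × ↥(zOneDiv 2),
      ∀ k : ℕ,
        e (ofL k ![1, 1]) = (quarterPow k, 0) ∧
        e (ofL k ![1, -1]) = (0, halfPow k) := by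
  have hval : Function.Injective
      (Prod.map (Subtype.val : zOneDiv 2 → ℚ) (Subtype.val : zOneDiv 2 → ℚ)) :=
    Subtype.val_injective.prodMap Subtype.val_injective
  refine ⟨limitEquiv, fun k => ⟨hval ?_, hval ?_⟩⟩
  · exact (prodMap_val_limitEquiv_ofL k _).trans (eigenCoord_one_one k)
  · exact (prodMap_val_limitEquiv_ofL k _).trans (eigenCoord_one_neg_one k)
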